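/- arXiv:1708.08301 — 8 statements merged into one kernel-verified Lean document; each statement's English description precedes it below -/
import Mathlib

section
/- Let G be a group acting on a set X. Then G acts subprimitively on X (i.e., for every normal subgroup H of G, the image of H in Sym(X) acts faithfully on every H-orbit) if and only if for every chain L ⊴ K ⊴ G of subgroups, either L acts trivially on X or L fixes no point of X. -/
/-- `G` acts subprimitively on `X` if for every normal subgroup `H` of `G`, the image of `H`
in `Sym(X)` acts faithfully on every `H`-orbit: any element of `H` that fixes some `H`-orbit
pointwise must act trivially on all of `X`. -/
def Subprimitive (G X : Type*) [Group G] [MulAction G X] : Prop :=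
  ∀ H : Subgroup G, H.Normal →
    ∀ x : X, ∀ h ∈ H, (∀ y ∈ MulAction.orbit H x, h • y = y) → ∀ z : X, h • z = z

/-- A group `G` acting on a set `X` acts subprimitively iff for every chain `L ⊴ K ⊴ G`,
either `L` acts trivially on `X` or `L` fixes no point of `X`. -/
theorem subprimitive_iff (G X : Type*) [Group G] [MulAction G X] :
    Subprimitive G X ↔
      ∀ L K : Subgroup G, L ≤ K → (L.subgroupOf K).Normal → K.Normal →
        (∀ g ∈ L, ∀ x : X, g • x = x) ∨ (∀ x : X, ∃ g ∈ L, g • x ≠ x) := by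
  constructor
  · intro hs L K hLK hLnorm hKnorm
    by_cases hfix : ∃ x : X, ∀ g ∈ L, g • x = x
    · left
      obtain ⟨x, hx⟩ := hfix
      intro g hg z
      refine hs K hKnorm x g (hLK hg) ?_ z
      rintro y ⟨k, rfl⟩
      have hconj : ((k⁻¹ * ⟨g, hLK hg⟩ * k⁻¹⁻¹ : K) : G) ∈ L := by
        have := hLnorm.conj_mem ⟨g, hLK hg⟩ (Subgroup.mem_subgroupOf.mpr hg) k⁻¹
        exact Subgroup.mem_subgroupOf.mp this
      have hc : ((k : G)⁻¹ * g * (k : G)) ∈ L := by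
        simpa using hconj
      have h1 : ((k : G)⁻¹ * g * (k : G)) • x = x := hx _ hc
      have : g • ((k : G) • x) = (k : G) • x := by
        have := congrArg (fun w => (k : G) • w) h1
        simpa [mul_smul] using this
      simpa [Subgroup.smul_def] using this
    · right
      push_neg at hfix
      exact hfix
  · intro hc H hH x h hhH hfix z
    set L : Subgroup G :=
      { carrier := {g | g ∈ H ∧ ∀ y ∈ MulAction.orbit H x, g • y = y}
        one_mem' := ⟨H.one_mem, fun y _ => one_smul G y⟩
        mul_mem' := fun {a b} ha hb =>
          ⟨H.mul_mem ha.1 hb.1, fun y hy => by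
            rw [mul_smul, hb.2 y hy, ha.2 y hy]⟩
        inv_mem' := fun {a} ha =>
          ⟨H.inv_mem ha.1, fun y hy => inv_smul_eq_iff.mpr (ha.2 y hy).symm⟩ } with hLdef
    have hLH : L ≤ H := fun g hg => hg.1
    have hLnorm : (L.subgroupOf H).Normal := by
      constructor
      intro n hn k
      rw [Subgroup.mem_subgroupOf] at hn ⊢
      refine ⟨H.mul_mem (H.mul_mem k.2 hn.1) (H.inv_mem k.2), ?_⟩
      rintro y ⟨m, rfl⟩
      have horb : (k : G)⁻¹ • (m : G) • x ∈ MulAction.orbit H x := by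
        refine ⟨⟨(k : G)⁻¹ * (m : G), H.mul_mem (H.inv_mem k.2) m.2⟩, ?_⟩
        simp [Subgroup.smul_def, mul_smul]
      have hfixn := hn.2 _ horb
      show ((k : G) * (n : G) * (k : G)⁻¹) • ((m : G) • x) = (m : G) • x
      rw [mul_smul, mul_smul, hfixn]
      simp [Subgroup.smul_def, mul_smul]
    rcases hc L H hLH hLnorm hH with hl | hr
    · exact hl h ⟨hhH, hfix⟩ z
    · obtain ⟨g, hgL, hgx⟩ := hr x
      exact absurd (hgL.2 x (MulAction.mem_orbit_self x)) hgx
end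

section
/- Let G be a group and let K₁/L₁ and K₂/L₂ be associated chief factors of G. Then the centralizer in G of the factor K₁/L₁ equals the centralizer in G of the factor K₂/L₂, i.e., {g ∈ G : [K₁, g] ⊆ L₁} = {g ∈ G : [K₂, g] ⊆ L₂}. -/
open scoped commutatorElement

/-- `K/L` is a chief factor of `G`. -/
def ChiefFactor (G : Type*) [Group G] (K L : Subgroup G) : Prop :=
  K.Normal ∧ L.Normal ∧ L < K ∧ ∀ M : Subgroup G, M.Normal → L < M → M < K → False

/-
Write `k ∈ K₂ ≤ K₁L₂` as `k = ab` with `a ∈ K₁`, `b ∈ L₂`. For `g` centralizing `K₁/L₁`, the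
commutator `⁅ab, g⁆ = a⁅b, g⁆a⁻¹ ⁅a, g⁆` lies in `L₂L₁`, and also in `K₂` by normality, hence in
`K₂ ∩ L₁L₂ = L₂`. Both inclusions are instances of this, with the roles of the factors swapped.
-/

section FactorCentralizer

variable {G : Type*} [Group G]

def factorCentralizer (K L : Subgroup G) : Set G := {g | ∀ k ∈ K, ⁅k, g⁆ ∈ L}

theorem factorCentralizer_subset {K₁ L₁ K₂ L₂ : Subgroup G} [K₂.Normal] [L₂.Normal]
    (hK : K₂ ≤ K₁ ⊔ L₂) (hL : K₂ ⊓ (L₁ ⊔ L₂) ≤ L₂) :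
    factorCentralizer K₁ L₁ ⊆ factorCentralizer K₂ L₂ := by
  intro g hg k hk
  obtain ⟨a, ha, b, hb, rfl⟩ := Subgroup.mem_sup_of_normal_right.mp (hK hk)
  have hbg : ⁅b, g⁆ ∈ L₂ :=
    L₂.commutator_le_left ⊤ (Subgroup.commutator_mem_commutator hb (Subgroup.mem_top g))
  have h_sup : ⁅a * b, g⁆ ∈ L₁ ⊔ L₂ := by
    rw [commutatorElement_mul_left_eq_conj_mul]
    exact mul_mem (Subgroup.mem_sup_right (‹L₂.Normal›.conj_mem _ hbg a))
      (Subgroup.mem_sup_left (hg a ha))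
  have h_K₂ : ⁅a * b, g⁆ ∈ K₂ :=
    K₂.commutator_le_left ⊤ (Subgroup.commutator_mem_commutator hk (Subgroup.mem_top g))
  exact hL ⟨h_K₂, h_sup⟩

end FactorCentralizer

/-- Associated chief factors have the same centralizer:
`{g : [K₁,g] ⊆ L₁} = {g : [K₂,g] ⊆ L₂}`. -/
theorem associated_chieffactors_centralizer_eq (G : Type*) [Group G]
    (K₁ L₁ K₂ L₂ : Subgroup G)
    (h₁ : ChiefFactor G K₁ L₁) (h₂ : ChiefFactor G K₂ L₂)
    (ha₁ : K₁ ⊔ L₂ = K₂ ⊔ L₁)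
    (ha₂ : K₁ ⊓ (L₁ ⊔ L₂) = L₁) (ha₃ : K₂ ⊓ (L₁ ⊔ L₂) = L₂) :
    {g : G | ∀ k ∈ K₁, ⁅k, g⁆ ∈ L₁} = {g : G | ∀ k ∈ K₂, ⁅k, g⁆ ∈ L₂} := by
  obtain ⟨hK₁, hL₁, -⟩ := h₁
  obtain ⟨hK₂, hL₂, -⟩ := h₂
  apply Set.Subset.antisymm
  · exact factorCentralizer_subset (ha₁ ▸ le_sup_left) ha₃.le
  · refine factorCentralizer_subset (ha₁.symm ▸ le_sup_left) ?_
    rw [sup_comm L₂]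
    exact ha₂.le
end

section
/- Let G be a finite group and A a nontrivial normal subgroup of G. Let M(A) be the intersection of all maximal normal subgroups of A, and M_G(A) the intersection of all maximal proper G-invariant subgroups of A. Then [A, M_G(A)] ≤ M(A). -/
/-- `B` is a `G`-invariant subgroup of `A`: a subgroup of `A` normalized by all of `G`. -/
def IsGInv (G : Type*) [Group G] (A B : Subgroup G) : Prop :=
  B ≤ A ∧ ∀ g : G, ∀ b ∈ B, g * b * g⁻¹ ∈ B

/-- `B` is a maximal proper `G`-invariant subgroup of `A`. -/
def IsMaxGInv (G : Type*) [Group G] (A B : Subgroup G) : Prop :=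
  IsGInv G A B ∧ B < A ∧ ∀ C : Subgroup G, IsGInv G A C → C < A → B ≤ C → B = C

/-- `M_G(A)`: the intersection of all maximal proper `G`-invariant subgroups of `A`. -/
def MG (G : Type*) [Group G] (A : Subgroup G) : Subgroup G :=
  sInf {B | IsMaxGInv G A B}

/-- `B` is a maximal proper normal subgroup of `A` (as subgroups of `G`). -/
def IsMaxNormalIn (G : Type*) [Group G] (A B : Subgroup G) : Prop :=
  (B ≤ A ∧ ∀ a ∈ A, ∀ b ∈ B, a * b * a⁻¹ ∈ B) ∧ B < A ∧
    ∀ C : Subgroup G, (C ≤ A ∧ ∀ a ∈ A, ∀ c ∈ C, a * c * a⁻¹ ∈ C) → C < A → B ≤ C → B = C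

/-- `M(A)`: the Mel'nikov subgroup (cosocle) of `A`, the intersection of all maximal
proper normal subgroups of `A`. -/
def Mel (G : Type*) [Group G] (A : Subgroup G) : Subgroup G :=
  sInf {B | IsMaxNormalIn G A B}

/-!
Fix a maximal normal subgroup `N` of `A`. If `A/N` is abelian then
`[A, M_G(A)] ≤ [A, A] ≤ N`; otherwise `A/N` is nonabelian simple and in fact `M_G(A) ≤ N`.
Conjugation by `G` acts on `A` by automorphisms, so the conjugates `N^g` are again maximal normal
in `A` with nonabelian quotient, and their intersection is the normal core of `N`. If
`M_G(A) ≰ N`, a maximal `G`-invariant `M` above that core satisfies `M ≰ N^g`, hence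
`M N^g = A`, for every `g`. For a normal `T` with `T N_i = A` for all `i`, induction on the
family gives `T (⋂ N_i) = A`: if `S T = A` and `S ≰ N_i` then `S N_i = A`, so
`S / (S ⊓ N_i) ≅ A / N_i` is perfect, and `[S, S] ≤ [S, N_i T] ≤ (S ⊓ N_i) T`. Since the core
lies in `M`, this forces `M = A`, a contradiction.
-/

open Subgroup

namespace Subgroup

variable {H : Type*} [Group H]

theorem commutator_sup_le_commutator_sup (X Y N : Subgroup H) [N.Normal] :
    ⁅X ⊔ N, Y ⊔ N⁆ ≤ ⁅X, Y⁆ ⊔ N := by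
  rw [← QuotientGroup.ker_mk' N, ← comap_map_eq (QuotientGroup.mk' N) ⁅X, Y⁆,
    ← map_le_iff_le_comap, map_commutator, map_commutator, map_sup, map_sup,
    (map_eq_bot_iff _).mpr le_rfl, sup_bot_eq, sup_bot_eq]

theorem inf_sup_le_sup_inf_of_le {C P N : Subgroup H} [N.Normal] (hCP : C ≤ P) :
    P ⊓ (C ⊔ N) ≤ C ⊔ (P ⊓ N) := by
  rintro x ⟨hxP, hxCN⟩
  obtain ⟨c, hc, n, hn, rfl⟩ := mem_sup_of_normal_right.mp hxCN
  have hnP : n ∈ P := by simpa using mul_mem (inv_mem (hCP hc)) hxP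
  exact mul_mem_sup hc ⟨hnP, hn⟩

/-- `⊤` satisfies this too; it is excluded wherever it matters by `¬ commutator H ≤ N`. -/
def IsMaximalNormal (N : Subgroup H) : Prop :=
  N.Normal ∧ ∀ D : Subgroup H, D.Normal → N ≤ D → D = N ∨ D = ⊤

theorem IsMaximalNormal.comap {K : Type*} [Group K] {N : Subgroup H} (hN : N.IsMaximalNormal)
    (φ : K ≃* H) : (N.comap φ.toMonoidHom).IsMaximalNormal := by
  refine ⟨hN.1.comap _, fun D hD hND => ?_⟩
  have hcomap_map := comap_map_eq_self_of_injective (f := φ.toMonoidHom) φ.injective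
  have hNmap : N ≤ D.map φ.toMonoidHom := by
    rw [← map_comap_eq_self_of_surjective (f := φ.toMonoidHom) φ.surjective N]
    exact map_mono hND
  rcases hN.2 _ (hD.map _ φ.surjective) hNmap with h | h
  · left; rw [← h, hcomap_map]
  · right; rw [← hcomap_map D, h, comap_top]

theorem commutator_le_comap_iff {K : Type*} [Group K] {N : Subgroup H} (φ : K ≃* H) :
    _root_.commutator K ≤ N.comap φ.toMonoidHom ↔ _root_.commutator H ≤ N := by
  rw [← map_le_iff_le_comap, map_commutator_eq, MonoidHom.range_eq_top.mpr φ.surjective,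
    _root_.commutator_def]

/-- `S / (S ⊓ N) ≅ H / N` is perfect. -/
theorem le_commutator_sup_inf {S N : Subgroup H} [S.Normal] (hN : N.IsMaximalNormal)
    (hab : ¬ _root_.commutator H ≤ N) (hSN : S ⊔ N = ⊤) : S ≤ ⁅S, S⁆ ⊔ (S ⊓ N) := by
  have := hN.1
  rcases hN.2 (⁅S, S⁆ ⊔ (S ⊓ N) ⊔ N) inferInstance le_sup_right with h | h
  · refine absurd ?_ hab
    calc _root_.commutator H = ⁅S ⊔ N, S ⊔ N⁆ := by rw [hSN, _root_.commutator_def]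
      _ ≤ ⁅S, S⁆ ⊔ N := commutator_sup_le_commutator_sup S S N
      _ ≤ N := sup_le (le_sup_left.trans (le_sup_left.trans h.le)) le_rfl
  · have hle : ⁅S, S⁆ ⊔ (S ⊓ N) ≤ S := sup_le (commutator_le_self S) inf_le_left
    calc S = S ⊓ (⁅S, S⁆ ⊔ (S ⊓ N) ⊔ N) := by rw [h, inf_top_eq]
      _ ≤ ⁅S, S⁆ ⊔ (S ⊓ N) ⊔ (S ⊓ N) := inf_sup_le_sup_inf_of_le hle
      _ = ⁅S, S⁆ ⊔ (S ⊓ N) := by rw [sup_assoc, sup_idem]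

theorem IsMaximalNormal.inf_sup_eq_top {N S T : Subgroup H} [S.Normal] [T.Normal]
    (hN : N.IsMaximalNormal) (hab : ¬ _root_.commutator H ≤ N) (hNT : N ⊔ T = ⊤)
    (hST : S ⊔ T = ⊤) : N ⊓ S ⊔ T = ⊤ := by
  have := hN.1
  by_cases hSN : S ≤ N
  · rwa [inf_eq_right.mpr hSN]
  have hSN' : S ⊔ N = ⊤ := (hN.2 _ inferInstance le_sup_right).resolve_left
    fun h => hSN (h ▸ le_sup_left)
  have hSS : ⁅S, S⁆ ≤ N ⊓ S ⊔ T :=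
    calc ⁅S, S⁆ ≤ ⁅S ⊔ T, N ⊔ T⁆ := commutator_mono le_sup_left (hNT ▸ le_top)
      _ ≤ ⁅S, N⁆ ⊔ T := commutator_sup_le_commutator_sup S N T
      _ ≤ N ⊓ S ⊔ T := sup_le_sup_right ((commutator_le_inf S N).trans (inf_comm _ _).le) T
  have hS : S ≤ N ⊓ S ⊔ T :=
    (le_commutator_sup_inf hN hab hSN').trans (sup_le hSS ((inf_comm _ _).le.trans le_sup_left))
  rw [eq_top_iff, ← hST]
  exact sup_le hS le_sup_right

theorem finset_inf_sup_eq_top {ι : Type*} {N : ι → Subgroup H} {T : Subgroup H} [T.Normal]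
    (hN : ∀ i, (N i).IsMaximalNormal) (hab : ∀ i, ¬ _root_.commutator H ≤ N i) (s : Finset ι)
    (hNT : ∀ i ∈ s, N i ⊔ T = ⊤) : s.inf N ⊔ T = ⊤ := by
  classical
  induction s using Finset.induction_on with
  | empty => simp
  | insert i s _ ih =>
    have : (s.inf N).Normal := Finset.inf_induction normal_top
      (fun _ _ _ _ => inferInstance) fun i _ => (hN i).1
    rw [Finset.inf_insert]
    exact (hN i).inf_sup_eq_top (hab i) (hNT i (Finset.mem_insert_self i s))
      (ih fun j hj => hNT j (Finset.mem_insert_of_mem hj))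

theorem eq_top_of_iInf_le_of_sup_eq_top {ι : Type*} [Finite ι] {N : ι → Subgroup H}
    {T : Subgroup H} [T.Normal] (hN : ∀ i, (N i).IsMaximalNormal)
    (hab : ∀ i, ¬ _root_.commutator H ≤ N i) (hNT : ∀ i, N i ⊔ T = ⊤) (hT : ⨅ i, N i ≤ T) :
    T = ⊤ := by
  have := Fintype.ofFinite ι
  rw [← finset_inf_sup_eq_top hN hab Finset.univ fun i _ => hNT i, Finset.inf_univ_eq_iInf,
    sup_eq_right.mpr hT]

end Subgroup

section

variable {G : Type*} [Group G] {A N M : Subgroup G}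

theorem isGInv_iff : IsGInv G A M ↔ M ≤ A ∧ M.Normal :=
  ⟨fun h => ⟨h.1, ⟨fun m hm g => h.2 g m hm⟩⟩, fun h => ⟨h.1, fun g m hm => h.2.conj_mem m hm g⟩⟩

theorem exists_isMaxGInv_ge [Finite G] (hM : IsGInv G A M) (hMA : M < A) :
    ∃ M', IsMaxGInv G A M' ∧ M ≤ M' := by
  have : Finite (Subgroup G) := Finite.of_injective _ SetLike.coe_injective
  obtain ⟨M', hMM', hmax⟩ :=
    (Set.toFinite {B | IsGInv G A B ∧ B < A}).exists_le_maximal ⟨hM, hMA⟩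
  exact ⟨M', ⟨hmax.prop.1, hmax.prop.2, fun C hC hCA => hmax.eq_of_le ⟨hC, hCA⟩⟩, hMM'⟩

theorem MG_le_of_isMaxGInv (hM : IsMaxGInv G A M) : MG G A ≤ M :=
  sInf_le hM

theorem MG_le_self [Finite G] (hA : A ≠ ⊥) : MG G A ≤ A := by
  obtain ⟨M, hM, -⟩ := exists_isMaxGInv_ge (isGInv_iff.mpr ⟨bot_le, normal_bot⟩)
    (bot_lt_iff_ne_bot.mpr hA)
  exact (MG_le_of_isMaxGInv hM).trans hM.1.1

theorem IsMaxNormalIn.commutator_le (hN : IsMaxNormalIn G A N) : ⁅A, N⁆ ≤ N :=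
  Subgroup.commutator_le.mpr fun a ha n hn => mul_mem (hN.1.2 a ha n hn) (inv_mem hn)

theorem IsMaxNormalIn.isMaximalNormal_subgroupOf (hN : IsMaxNormalIn G A N) :
    (N.subgroupOf A).IsMaximalNormal := by
  obtain ⟨⟨hNA, hNnorm⟩, -, hmax⟩ := hN
  refine ⟨(normal_subgroupOf_iff hNA).mpr fun n a hn ha => hNnorm a ha n hn, fun D hD hND => ?_⟩
  have hDA : D.map A.subtype ≤ A := map_subtype_le D
  have hDnorm : ∀ a ∈ A, ∀ d ∈ D.map A.subtype, a * d * a⁻¹ ∈ D.map A.subtype := by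
    rintro a ha _ ⟨d, hd, rfl⟩
    exact mem_map_of_mem A.subtype (hD.conj_mem d hd ⟨a, ha⟩)
  have hD : D = (D.map A.subtype).subgroupOf A :=
    (comap_map_eq_self_of_injective A.subtype_injective D).symm
  rcases hDA.lt_or_eq with hlt | heq
  · left
    have hND' : N ≤ D.map A.subtype := by
      rw [← map_subgroupOf_eq_of_le hNA]; exact map_mono hND
    rw [hD, ← hmax _ ⟨hDA, hDnorm⟩ hlt hND']
  · right
    rw [hD, heq, subgroupOf_self]

theorem not_commutator_le_subgroupOf (hab : ¬ ⁅A, A⁆ ≤ N) :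
    ¬ _root_.commutator A ≤ N.subgroupOf A := fun h =>
  hab (map_subtype_commutator A ▸ map_le_iff_le_comap.mpr h)

theorem iInf_comap_conjNormal_subgroupOf [A.Normal] :
    ⨅ g : G, (N.subgroupOf A).comap (MulAut.conjNormal g).toMonoidHom =
      N.normalCore.subgroupOf A := by
  ext x
  simp only [mem_iInf, mem_comap, mem_subgroupOf, MulEquiv.coe_toMonoidHom,
    MulAut.conjNormal_apply]
  rfl

theorem IsMaxNormalIn.le_of_normalCore_le [Finite G] [A.Normal] (hN : IsMaxNormalIn G A N)
    (hab : ¬ ⁅A, A⁆ ≤ N) (hM : IsGInv G A M) (hcore : N.normalCore ≤ M) (hMN : ¬ M ≤ N) :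
    A ≤ M := by
  obtain ⟨hMA, hMnormal⟩ := isGInv_iff.mp hM
  set Ng : G → Subgroup A := fun g => (N.subgroupOf A).comap (MulAut.conjNormal g).toMonoidHom
  have hmax : ∀ g, (Ng g).IsMaximalNormal := fun g => hN.isMaximalNormal_subgroupOf.comap _
  have hab' : ∀ g, ¬ _root_.commutator A ≤ Ng g := fun g => by
    rw [commutator_le_comap_iff]; exact not_commutator_le_subgroupOf hab
  have hsup : ∀ g, Ng g ⊔ M.subgroupOf A = ⊤ := fun g => by
    have := (hmax g).1
    -- `M` is `G`-invariant, so `M ≤ N^g` would give `M ≤ N`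
    refine ((hmax g).2 _ inferInstance le_sup_left).resolve_left fun h => hMN fun m hm => ?_
    have hm' : g⁻¹ * m * g⁻¹⁻¹ ∈ M := hMnormal.conj_mem m hm g⁻¹
    have := (le_sup_right.trans h.le) (x := ⟨_, hMA hm'⟩) hm'
    simpa [Ng, mem_subgroupOf, mul_assoc] using this
  have hcore' : ⨅ g, Ng g ≤ M.subgroupOf A := by
    rw [iInf_comap_conjNormal_subgroupOf]; exact fun x hx => hcore hx
  exact subgroupOf_eq_top.mp (eq_top_of_iInf_le_of_sup_eq_top hmax hab' hsup hcore')

theorem MG_le_of_isMaxNormalIn [Finite G] [A.Normal] (hN : IsMaxNormalIn G A N)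
    (hab : ¬ ⁅A, A⁆ ≤ N) : MG G A ≤ N := by
  by_contra hMGN
  have hcore : IsGInv G A N.normalCore :=
    isGInv_iff.mpr ⟨N.normalCore_le.trans hN.1.1, inferInstance⟩
  obtain ⟨M, hM, hcoreM⟩ := exists_isMaxGInv_ge hcore (N.normalCore_le.trans_lt hN.2.1)
  exact hM.2.1.not_ge (hN.le_of_normalCore_le hab hM.1 hcoreM
    fun hMN => hMGN ((MG_le_of_isMaxGInv hM).trans hMN))

end

theorem commutator_MG_le_Mel_general (G : Type*) [Group G] [Finite G] (A : Subgroup G)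
    (hA : A.Normal) :
    ⁅A, MG G A⁆ ≤ Mel G A := by
  refine le_sInf fun N hN => ?_
  by_cases hab : ⁅A, A⁆ ≤ N
  · exact (commutator_mono le_rfl (MG_le_self (ne_bot_of_gt hN.2.1))).trans hab
  · exact (commutator_mono le_rfl (MG_le_of_isMaxNormalIn hN hab)).trans hN.commutator_le

/-- For a finite group `G` and nontrivial normal subgroup `A`, `[A, M_G(A)] ≤ M(A)`. -/
theorem commutator_MG_le_Mel (G : Type*) [Group G] [Finite G] (A : Subgroup G)
    (hA : A.Normal) (hnt : A ≠ ⊥) :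
    ⁅A, MG G A⁆ ≤ Mel G A :=
  commutator_MG_le_Mel_general G A hA
end

section
/- Let G be a finite group and A a nontrivial normal subgroup of G with A > M(A)[A,G]. Then A is narrow in G (has a unique maximal proper G-invariant subgroup) if and only if the index |A : M(A)[A,G]| is prime and every chief factor of G of the form A/C is central. Moreover, in that case M_G(A) = M(A)[A,G]. -/
/-- `A` is narrow in `G`: it has a unique maximal proper `G`-invariant subgroup. -/
def Narrow (G : Type*) [Group G] (A : Subgroup G) : Prop :=
  ∃! B : Subgroup G, IsMaxGInv G A B

open scoped commutatorElement

/-!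
Write `N = M(A)[A,G]`. A subgroup of `A` containing `[A,G]` is automatically `G`-invariant, so
the maximal `G`-invariant subgroups containing `[A,G]` are exactly the maximal normal subgroups of
`A` containing `[A,G]`, and `N` is maximal `G`-invariant iff `|A : N|` is prime. The chief factors
`A/C` are exactly the quotients by maximal `G`-invariant subgroups `C`; if they are all central,
each such `C` contains `[A,G]` and hence `M(A)`, so it contains `N` and, when `N` is maximal,
equals `N`.

Conversely, if `B` is the unique maximal `G`-invariant subgroup then `N ≤ B`, and the point is
that `B = N`. Normal subgroups of `A` form a modular lattice, in which an element lying above a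
finite meet of coatoms (as `N` lies above `M(A)`) is the meet of the coatoms above it; the only
maximal normal subgroup of `A` containing `N` is `B`.
-/

section ModularLattice

variable {α : Type*} [Lattice α] [OrderTop α] [IsModularLattice α]

theorem isCoatom_sup_inf_of_isCoatom {a c d : α} (hc : IsCoatom c) (hcd : c ⊔ d = ⊤)
    (had : a ⊔ d = ⊤) (hle : a ⊓ d ≤ c) : IsCoatom (a ⊔ c ⊓ d) := by
  have hcov : c ⊓ d ⋖ d := inf_covBy_of_covBy_sup_left (hcd ▸ covBy_top_iff.2 hc)
  have hinf : d ⊓ (a ⊔ c ⊓ d) = c ⊓ d := by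
    rw [inf_comm, sup_comm, sup_inf_assoc_of_le a inf_le_right]
    exact sup_eq_left.2 (le_inf hle inf_le_right)
  have htop : d ⊔ (a ⊔ c ⊓ d) = ⊤ :=
    top_le_iff.1 (had ▸ sup_comm d a ▸ sup_le_sup_left le_sup_left d)
  rw [← covBy_top_iff, ← htop]
  exact covBy_sup_of_inf_covBy_left (by rwa [hinf])

theorem le_of_forall_isCoatom_of_inf_le {s : Finset α} (hs : ∀ c ∈ s, IsCoatom c) {a b : α}
    (ha : s.inf id ≤ a) (hb : ∀ c, IsCoatom c → a ≤ c → b ≤ c) : b ≤ a := by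
  classical
  induction s using Finset.induction_on generalizing a b with
  | empty => simp_all
  | insert d s _ ih =>
    rw [Finset.inf_insert, id] at ha
    set k := s.inf id
    have hs' : ∀ c ∈ s, IsCoatom c := fun c hc => hs c (Finset.mem_insert_of_mem hc)
    have hd : IsCoatom d := hs d (Finset.mem_insert_self d s)
    by_cases hka : k ≤ a
    · exact ih hs' hka hb
    have hkd : ¬ k ≤ d := fun h => hka (inf_eq_right.2 h ▸ ha)
    by_cases had : a ≤ d
    · have hbk : b ≤ a ⊔ k :=
        ih hs' le_sup_right fun c hc hac => hb c hc (le_sup_left.trans hac)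
      calc b ≤ (a ⊔ k) ⊓ d := le_inf hbk (hb d hd had)
        _ = a ⊔ k ⊓ d := sup_inf_assoc_of_le k had
        _ ≤ a := sup_le le_rfl (inf_comm d k ▸ ha)
    have hda : a ⊔ d = ⊤ := sup_comm d a ▸ hd.2 _ (left_lt_sup.2 had)
    -- `c ↦ a ⊔ c ⊓ d` sends the coatoms above `a ⊓ d ⊔ k` to coatoms above `a`.
    have hbd : (a ⊔ b) ⊓ d ⊔ k ≤ a ⊓ d ⊔ k := by
      refine ih hs' le_sup_right fun c hc hac => sup_le ?_ (le_sup_right.trans hac)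
      have hcd : c ⊔ d = ⊤ :=
        hc.sup_eq_top_of_ne hd (by rintro rfl; exact hkd (le_sup_right.trans hac))
      have hbc : b ≤ a ⊔ c ⊓ d :=
        hb _ (isCoatom_sup_inf_of_isCoatom hc hcd hda (le_sup_left.trans hac)) le_sup_left
      calc (a ⊔ b) ⊓ d ≤ (a ⊔ c ⊓ d) ⊓ d := inf_le_inf_right d (sup_le le_sup_left hbc)
        _ = a ⊓ d ⊔ c ⊓ d := by rw [sup_comm, sup_inf_assoc_of_le a inf_le_right, sup_comm]
        _ ≤ c := sup_le (le_sup_left.trans hac) inf_le_left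
    have hbd' : (a ⊔ b) ⊓ d ≤ a := by
      calc (a ⊔ b) ⊓ d ≤ (a ⊓ d ⊔ k) ⊓ d := le_inf (le_sup_left.trans hbd) inf_le_right
        _ = a ⊓ d ⊔ k ⊓ d := sup_inf_assoc_of_le k inf_le_right
        _ ≤ a := sup_le inf_le_left (inf_comm d k ▸ ha)
    calc b ≤ (a ⊔ d) ⊓ (a ⊔ b) := le_inf (hda ▸ le_top) le_sup_right
      _ = a ⊔ d ⊓ (a ⊔ b) := sup_inf_assoc_of_le d le_sup_left
      _ ≤ a := sup_le le_rfl (inf_comm d _ ▸ hbd')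

end ModularLattice

namespace Subgroup

variable {G : Type*} [Group G]

theorem index_prime_of_isCoatom [Finite G] {N : Subgroup G} [N.Normal] (hN : IsCoatom N) :
    N.index.Prime := by
  obtain ⟨q, hq, hqN⟩ := Nat.exists_prime_and_dvd (mt index_eq_one.1 hN.1)
  have := Fact.mk hq
  rw [index_eq_card] at hqN ⊢
  obtain ⟨x, hx⟩ := exists_prime_orderOf_dvd_card' q hqN
  obtain ⟨y, rfl⟩ := QuotientGroup.mk'_surjective N x
  have hyN : y ∉ N := fun hy => hq.ne_one <| by
    rwa [← hx, orderOf_eq_one_iff, QuotientGroup.mk'_apply, QuotientGroup.eq_one_iff]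
  have hNK : N ≤ (zpowers (QuotientGroup.mk' N y)).comap (QuotientGroup.mk' N) := by
    intro n hn
    simp [mem_comap, (QuotientGroup.eq_one_iff n).2 hn]
  have hK : (zpowers (QuotientGroup.mk' N y)).comap (QuotientGroup.mk' N) = ⊤ :=
    (hN.le_iff.1 hNK).resolve_right fun h => hyN (h ▸ mem_comap.2 (mem_zpowers _))
  have htop : zpowers (QuotientGroup.mk' N y) = ⊤ :=
    comap_injective (QuotientGroup.mk'_surjective N) (by rw [hK, comap_top])
  have hcard := Nat.card_zpowers (QuotientGroup.mk' N y)
  rw [htop, card_top, hx] at hcard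
  rwa [hcard]

def normalSubgroupsOf (A : Subgroup G) : Sublattice (Subgroup G) where
  carrier := {B | B ≤ A ∧ ∀ a ∈ A, ∀ b ∈ B, a * b * a⁻¹ ∈ B}
  supClosed' B hB C hC := by
    refine ⟨sup_le hB.1 hC.1, le_normalizer_iff.1 ?_⟩
    exact (le_inf (le_normalizer_iff.2 hB.2) (le_normalizer_iff.2 hC.2)).trans
      (normalizer_inf_normalizer_le_normalizer_sup B C)
  infClosed' B hB C hC :=
    ⟨inf_le_left.trans hB.1, fun a ha b hb => ⟨hB.2 a ha b hb.1, hC.2 a ha b hb.2⟩⟩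

variable {A : Subgroup G}

instance : OrderTop (normalSubgroupsOf A) where
  top := ⟨A, le_rfl, fun _ ha _ hb => mul_mem (mul_mem ha hb) (inv_mem ha)⟩
  le_top B := B.2.1

open scoped Pointwise in
instance : IsModularLattice (normalSubgroupsOf A) where
  sup_inf_le_assoc_of_le {x} y {z} hxz g hg := by
    obtain ⟨hgxy, hgz⟩ := mem_inf.1 hg
    have hxy : (((x ⊔ y : normalSubgroupsOf A) : Subgroup G) : Set G) =
        ((x : Subgroup G) : Set G) * ((y : Subgroup G) : Set G) := by
      rw [Sublattice.coe_sup]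
      exact coe_mul_of_left_le_normalizer_right _ _ (x.2.1.trans (le_normalizer_iff.2 y.2.2))
    rw [← SetLike.mem_coe, hxy] at hgxy
    obtain ⟨a, ha, b, hb, rfl⟩ := hgxy
    have hbz : b ∈ (z : Subgroup G) := (mul_mem_cancel_left (hxz ha)).1 hgz
    exact mul_mem_sup ha (mem_inf.2 ⟨hb, hbz⟩)

theorem isMaxNormalIn_iff_isCoatom {B : normalSubgroupsOf A} :
    IsMaxNormalIn G A B ↔ IsCoatom B := by
  refine ⟨fun ⟨_, hlt, hmax⟩ => ⟨fun h => hlt.ne (congrArg Subtype.val h), fun C hBC => ?_⟩,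
    fun ⟨hne, hmax⟩ => ⟨B.2, lt_of_le_of_ne B.2.1 fun h => hne (Subtype.ext h), ?_⟩⟩
  · by_contra hne
    exact hBC.ne (Subtype.ext (hmax C C.2 (lt_of_le_of_ne C.2.1 fun h => hne (Subtype.ext h))
      hBC.le))
  · intro C hC hCA hBC
    by_contra hne
    exact hCA.ne (congrArg Subtype.val
      (hmax ⟨C, hC⟩ (lt_of_le_of_ne hBC fun h => hne (congrArg Subtype.val h))))

theorem le_of_forall_isMaxNormalIn_of_mel_le [Finite G] {N B : Subgroup G}
    (hN : N ∈ normalSubgroupsOf A) (hB : B ∈ normalSubgroupsOf A) (hMel : Mel G A ≤ N)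
    (h : ∀ D, IsMaxNormalIn G A D → N ≤ D → B ≤ D) : B ≤ N := by
  let s := (Set.toFinite {c : normalSubgroupsOf A | IsCoatom c}).toFinset
  refine le_of_forall_isCoatom_of_inf_le (s := s) (a := ⟨N, hN⟩) (b := ⟨B, hB⟩) (by simp [s])
    ((le_sInf fun D hD => ?_).trans hMel)
    fun c hc hNc => h c (isMaxNormalIn_iff_isCoatom.2 hc) hNc
  have hD : IsMaxNormalIn G A D := hD
  exact Finset.inf_le (f := id) (b := (⟨D, hD.1⟩ : normalSubgroupsOf A))
    (by simpa [s] using isMaxNormalIn_iff_isCoatom.1 hD)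

end Subgroup

section GInvariant

variable {G : Type*} [Group G] {A B C : Subgroup G}

open Subgroup

theorem isGInv_of_commutator_le (hCA : C ≤ A) (hC : ⁅A, (⊤ : Subgroup G)⁆ ≤ C) :
    IsGInv G A C := by
  refine ⟨hCA, fun g c hc => ?_⟩
  have hcomm : ⁅c⁻¹, g⁆ ∈ C := hC (commutator_mem_commutator (inv_mem (hCA hc)) (mem_top g))
  simpa [commutatorElement_def, mul_assoc] using mul_mem hc hcomm

theorem IsGInv.mem_normalSubgroupsOf (hC : IsGInv G A C) : C ∈ normalSubgroupsOf A :=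
  ⟨hC.1, fun a _ c hc => hC.2 a c hc⟩

theorem isMaxGInv_iff_isMaxNormalIn (hB : ⁅A, (⊤ : Subgroup G)⁆ ≤ B) :
    IsMaxGInv G A B ↔ IsMaxNormalIn G A B :=
  ⟨fun h => ⟨h.1.mem_normalSubgroupsOf, h.2.1, fun C hC hCA hBC =>
      h.2.2 C (isGInv_of_commutator_le hC.1 (hB.trans hBC)) hCA hBC⟩,
    fun h => ⟨isGInv_of_commutator_le h.2.1.le hB, h.2.1, fun C hC hCA hBC =>
      h.2.2 C hC.mem_normalSubgroupsOf hCA hBC⟩⟩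

theorem isMaxGInv_iff_chief : IsMaxGInv G A C ↔
    C.Normal ∧ C < A ∧ ∀ M : Subgroup G, M.Normal → C < M → M < A → False := by
  refine ⟨fun h => ⟨⟨fun c hc g => h.1.2 g c hc⟩, h.2.1, fun M hM hCM hMA => hCM.ne ?_⟩,
    fun ⟨hC, hCA, h⟩ => ⟨⟨hCA.le, fun g c hc => hC.conj_mem c hc g⟩, hCA,
      fun M hM hMA hCM => ?_⟩⟩
  · exact h.2.2 M ⟨hMA.le, fun g m hm => hM.conj_mem m hm g⟩ hMA hCM.le
  · by_contra hne
    exact h M ⟨fun m hm g => hM.2 g m hm⟩ (lt_of_le_of_ne hCM hne) hMA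

theorem forall_chief_central_iff :
    (∀ C : Subgroup G, C.Normal → C < A →
        (∀ M : Subgroup G, M.Normal → C < M → M < A → False) → ∀ a ∈ A, ∀ g : G, ⁅a, g⁆ ∈ C) ↔
      ∀ C, IsMaxGInv G A C → ⁅A, (⊤ : Subgroup G)⁆ ≤ C := by
  simp only [isMaxGInv_iff_chief, commutator_le, mem_top, forall_const, and_imp]

theorem isMaxGInv_iff_relIndex_prime [Finite G] {N : Subgroup G} (hNA : N ≤ A)
    (hN : ⁅A, (⊤ : Subgroup G)⁆ ≤ N) : IsMaxGInv G A N ↔ (N.relIndex A).Prime := by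
  have hmap : ∀ X : Subgroup A, (X.map A.subtype).subgroupOf A = X :=
    comap_map_eq_self_of_injective A.subtype_injective
  refine ⟨fun h => ?_, fun hp => ⟨isGInv_of_commutator_le hNA hN,
    lt_of_le_of_ne hNA fun e => hp.ne_one (relIndex_eq_one.2 e.ge), fun C _ hCA hNC => ?_⟩⟩
  · have : (N.subgroupOf A).Normal := (normal_subgroupOf_iff_le_normalizer hNA).2
      (le_normalizer_iff.2 fun a _ n hn => h.1.2 a n hn)
    refine index_prime_of_isCoatom
      ⟨fun h' => h.2.1.not_ge (subgroupOf_eq_top.1 h'), fun X hX => ?_⟩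
    have hNX : N ≤ X.map A.subtype := by
      simpa [subgroupOf_map_subtype, inf_eq_left.2 hNA] using map_mono (f := A.subtype) hX.le
    by_contra hX'
    have hXA : X.map A.subtype < A := lt_of_le_of_ne (map_subtype_le X) fun e =>
      hX' (by rw [← hmap X, e, subgroupOf_self])
    have hNX' := h.2.2 _ (isGInv_of_commutator_le (map_subtype_le X) (hN.trans hNX)) hXA hNX
    exact hX.ne (by rw [hNX', hmap])
  · rcases hp.eq_one_or_self_of_dvd _ (relIndex_dvd_of_le_left A hNC) with h1 | hCp
    · exact absurd (relIndex_eq_one.1 h1) hCA.not_ge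
    · have hmul := relIndex_mul_relIndex N C A hNC hCA.le
      rw [hCp, Nat.mul_eq_right hp.ne_zero, relIndex_eq_one] at hmul
      exact le_antisymm hNC hmul

theorem exists_isMaxGInv_ge_s11 [Finite G] (hC : IsGInv G A C) (hCA : C < A) :
    ∃ B, IsMaxGInv G A B ∧ C ≤ B := by
  obtain ⟨B, hCB, hB⟩ :=
    Finite.exists_le_maximal (p := fun B => IsGInv G A B ∧ B < A) ⟨hC, hCA⟩
  refine ⟨B, ⟨hB.prop.1, hB.prop.2, fun D hD hDA hBD => ?_⟩, hCB⟩
  exact le_antisymm hBD (hB.le_of_ge ⟨hD, hDA⟩ hBD)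

theorem Narrow.isMaxGInv_iff [Finite G] (h : Narrow G A)
    (hgt : Mel G A ⊔ ⁅A, (⊤ : Subgroup G)⁆ < A) :
    IsMaxGInv G A B ↔ B = Mel G A ⊔ ⁅A, (⊤ : Subgroup G)⁆ := by
  obtain ⟨B₀, hB₀, huniq⟩ := h
  have hN : IsGInv G A (Mel G A ⊔ ⁅A, ⊤⁆) := isGInv_of_commutator_le hgt.le le_sup_right
  have hle : ∀ C, IsGInv G A C → C < A → C ≤ B₀ := fun C hC hCA => by
    obtain ⟨B, hB, hCB⟩ := exists_isMaxGInv_ge_s11 hC hCA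
    exact huniq B hB ▸ hCB
  have hB₀N : B₀ = Mel G A ⊔ ⁅A, ⊤⁆ := by
    refine le_antisymm (le_of_forall_isMaxNormalIn_of_mel_le hN.mem_normalSubgroupsOf
      hB₀.1.mem_normalSubgroupsOf le_sup_left fun D hD hND => ?_) (hle _ hN hgt)
    exact (huniq D ((isMaxGInv_iff_isMaxNormalIn (le_sup_right.trans hND)).2 hD)).ge
  exact ⟨fun hB => hB₀N ▸ huniq B hB, fun hB => hB ▸ hB₀N ▸ hB₀⟩

theorem narrow_of_isMaxGInv_of_forall_commutator_le
    (hN : IsMaxGInv G A (Mel G A ⊔ ⁅A, (⊤ : Subgroup G)⁆))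
    (hcent : ∀ C, IsMaxGInv G A C → ⁅A, (⊤ : Subgroup G)⁆ ≤ C) : Narrow G A := by
  refine ⟨_, hN, fun B hB => (hN.2.2 B hB.1 hB.2.1 (sup_le ?_ (hcent B hB))).symm⟩
  exact sInf_le ((isMaxGInv_iff_isMaxNormalIn (hcent B hB)).1 hB)

end GInvariant

theorem narrow_iff_prime_index_and_central_general (G : Type*) [Group G] [Finite G]
    (A : Subgroup G)
    (hgt : Mel G A ⊔ ⁅A, (⊤ : Subgroup G)⁆ < A) :
    (Narrow G A ↔
      (((Mel G A ⊔ ⁅A, (⊤ : Subgroup G)⁆).relIndex A).Prime ∧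
        ∀ C : Subgroup G, C.Normal → C < A →
          (∀ M : Subgroup G, M.Normal → C < M → M < A → False) →
          ∀ a ∈ A, ∀ g : G, ⁅a, g⁆ ∈ C)) ∧
    (Narrow G A → MG G A = Mel G A ⊔ ⁅A, (⊤ : Subgroup G)⁆) := by
  rw [forall_chief_central_iff, ← isMaxGInv_iff_relIndex_prime hgt.le le_sup_right]
  refine ⟨⟨fun h => ⟨(h.isMaxGInv_iff hgt).2 rfl, fun C hC => ?_⟩,
    fun h => narrow_of_isMaxGInv_of_forall_commutator_le h.1 h.2⟩, fun h => ?_⟩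
  · exact (h.isMaxGInv_iff hgt).1 hC ▸ le_sup_right
  · simp only [MG, h.isMaxGInv_iff hgt, Set.ofPred_eq_eq_singleton, sInf_singleton]

/-- Let `G` be finite and `A ⊴ G` nontrivial with `A > M(A)[A,G]`.  Then `A` is narrow in
`G` iff `|A : M(A)[A,G]|` is prime and every chief factor of `G` of the form `A/C` is
central; moreover in that case `M_G(A) = M(A)[A,G]`. -/
theorem narrow_iff_prime_index_and_central (G : Type*) [Group G] [Finite G]
    (A : Subgroup G) (hA : A.Normal) (hnt : A ≠ ⊥)
    (hgt : Mel G A ⊔ ⁅A, (⊤ : Subgroup G)⁆ < A) :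
    (Narrow G A ↔
      (((Mel G A ⊔ ⁅A, (⊤ : Subgroup G)⁆).relIndex A).Prime ∧
        ∀ C : Subgroup G, C.Normal → C < A →
          (∀ M : Subgroup G, M.Normal → C < M → M < A → False) →
          ∀ a ∈ A, ∀ g : G, ⁅a, g⁆ ∈ C)) ∧
    (Narrow G A → MG G A = Mel G A ⊔ ⁅A, (⊤ : Subgroup G)⁆) :=
  narrow_iff_prime_index_and_central_general G A hgt
end

section
/- Let G be a group with chief factors a = K₁/L₁ and b = K₂/L₂ and c = K₃/L₃ such that a ≻ b and b ≻ c, where a ≻ b means L₁ ⊇ K₂ and L₁/L₂ is the unique maximal proper G-invariant subgroup of K₁/L₂. Then a ≻ c; that is, the relation ≻ is transitive. (Assume all quotients involved are finite.) -/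
/-- The relation `K₁/L₁ ≻ K₂/L₂` on chief factors of `G`: `L₁ ⊇ K₂` and `L₁/L₂` is the
unique maximal proper `G`-invariant subgroup of `K₁/L₂`, i.e. every normal subgroup `M`
of `G` with `L₂ ≤ M < K₁` satisfies `M ≤ L₁`. -/
def NarSucc (G : Type*) [Group G] (K₁ L₁ K₂ L₂ : Subgroup G) : Prop :=
  K₂ ≤ L₁ ∧ L₂ ≤ L₁ ∧ L₁ < K₁ ∧
    ∀ M : Subgroup G, M.Normal → L₂ ≤ M → M < K₁ → M ≤ L₁

/-- Transitivity of `≻` on chief factors (with `K₁/L₃` finite). -/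
theorem narSucc_trans (G : Type*) [Group G] (K₁ L₁ K₂ L₂ K₃ L₃ : Subgroup G)
    (h₁ : ChiefFactor G K₁ L₁) (h₂ : ChiefFactor G K₂ L₂) (h₃ : ChiefFactor G K₃ L₃)
    (hfin : Finite (K₁ ⧸ L₃.subgroupOf K₁))
    (hab : NarSucc G K₁ L₁ K₂ L₂) (hbc : NarSucc G K₂ L₂ K₃ L₃) :
    NarSucc G K₁ L₁ K₃ L₃ := by
  obtain ⟨hK2L1, hL2L1, hL1K1, hmax1⟩ := hab
  obtain ⟨hK3L2, hL3L2, hL2K2, hmax2⟩ := hbc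
  have hK2n : K₂.Normal := h₂.1
  have hL2n : L₂.Normal := h₂.2.1
  refine ⟨hK3L2.trans hL2L1, hL3L2.trans hL2L1, hL1K1, ?_⟩
  intro M hM hL3M hMK1
  haveI := hM; haveI := hK2n; haveI := hL2n
  by_cases hc : K₂ ≤ M
  · exact hmax1 M hM (hL2K2.le.trans hc) hMK1
  · -- M ⊓ K₂ is a proper normal subgroup of K₂ containing L₃, hence ≤ L₂
    have hinf : M ⊓ K₂ ≤ L₂ := by
      refine hmax2 (M ⊓ K₂) (Subgroup.normal_inf_normal M K₂) (le_inf hL3M (hL3L2.trans hL2K2.le)) ?_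
      exact lt_of_le_of_ne inf_le_right (fun h => hc (h ▸ inf_le_left))
    -- M ⊔ L₂ < K₁ : otherwise Dedekind gives K₂ ≤ L₂, contradiction
    have hsup : M ⊔ L₂ < K₁ := by
      refine lt_of_le_of_ne (sup_le hMK1.le (hL2L1.trans hL1K1.le)) ?_
      intro heq
      apply hL2K2.not_ge
      intro x hx
      have hx' : x ∈ M ⊔ L₂ := heq ▸ (hK2L1.trans hL1K1.le) hx
      rw [SetLike.mem_coe.symm, Subgroup.mul_normal] at hx'
      obtain ⟨m, hm, l, hl, rfl⟩ := hx'
      have hmK2 : m ∈ K₂ := by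
        have : m = (m * l) * l⁻¹ := by group
        rw [this]
        exact mul_mem hx (inv_mem (h₂.2.2.1.le hl))
      exact mul_mem (hinf ⟨hm, hmK2⟩) hl
    have := hmax1 (M ⊔ L₂) (Subgroup.sup_normal M L₂) le_sup_right hsup
    exact le_sup_left.trans this
end

section
/- Let G be a group and let K₁/L₁ ≻ K₂/L₂ be chief factors of G with a finite quotient K₁/L₂, where ≻ means L₁ ⊇ K₂ and L₁/L₂ is the unique maximal proper G-invariant subgroup of K₁/L₂. If N is a normal subgroup of G that covers K₁/L₁ (that is, N·L₁ ⊇ K₁), then N covers K₂/L₂ (that is, N·L₂ ⊇ K₂). -/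
/-- If `K₁/L₁ ≻ K₂/L₂` are chief factors of `G` (with `K₁/L₂` finite) and the normal
subgroup `N` covers `K₁/L₁` (i.e. `NL₁ ⊇ K₁`), then `N` covers `K₂/L₂` (i.e. `NL₂ ⊇ K₂`). -/
theorem covers_of_narSucc (G : Type*) [Group G] (K₁ L₁ K₂ L₂ N : Subgroup G)
    (h₁ : ChiefFactor G K₁ L₁) (h₂ : ChiefFactor G K₂ L₂)
    (hfin : Finite (K₁ ⧸ L₂.subgroupOf K₁))
    (hsucc : NarSucc G K₁ L₁ K₂ L₂)
    (hN : N.Normal) (hcov : K₁ ≤ N ⊔ L₁) :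
    K₂ ≤ N ⊔ L₂ := by
  obtain ⟨hK₁n, hL₁n, hL₁K₁, -⟩ := h₁
  obtain ⟨hK₂n, hL₂n, -, -⟩ := h₂
  obtain ⟨hK₂L₁, hL₂L₁, hlt, hmax⟩ := hsucc
  haveI := hL₁n
  set X : Subgroup G := (N ⊓ K₁) ⊔ L₂ with hX
  haveI : (N ⊓ K₁).Normal := @Subgroup.normal_inf_normal G _ N K₁ hN hK₁n
  haveI hXn : X.Normal := @Subgroup.sup_normal G _ _ _ this hL₂n
  have hXK : X ≤ K₁ := sup_le inf_le_right (hL₂L₁.trans hlt.le)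
  rcases hXK.lt_or_eq with hXlt | hXeq
  · -- contradiction: X ≤ L₁ forces K₁ ≤ L₁
    have hXL₁ : X ≤ L₁ := hmax X hXn le_sup_right hXlt
    exfalso
    apply hlt.not_ge
    intro x hx
    have hx' : x ∈ N ⊔ L₁ := hcov hx
    rw [← SetLike.mem_coe, Subgroup.mul_normal] at hx'
    obtain ⟨n, hn, l, hl, rfl⟩ := hx'
    have hnK : n ∈ K₁ := by
      have h1 : n = (n * l) * l⁻¹ := by group
      rw [h1]
      exact mul_mem hx (inv_mem (hlt.le hl))
    have : n ∈ L₁ := hXL₁ (le_sup_left (a := N ⊓ K₁) (b := L₂) ⟨hn, hnK⟩)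
    exact mul_mem this hl
  · calc K₂ ≤ K₁ := hK₂L₁.trans hlt.le
    _ = X := hXeq.symm
    _ ≤ N ⊔ L₂ := sup_le_sup_right inf_le_left _
end

section
/- Let G be a finite group, K/L a chief factor of G, and A a normal subgroup of G that is narrow (has a unique maximal proper G-invariant subgroup M_G(A)). If A ≤ K and A ≰ L, then A ∩ L = M_G(A) and AL = K, and A/M_G(A) is associated to K/L. -/
open Pointwise

/-- Let `G` be finite, `K/L` a chief factor of `G`, and `A` a narrow normal subgroup
of `G` with `A ≤ K` and `A ≰ L`.  Then `A ∩ L = M_G(A)`, `AL = K`, and the chief factor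
`A/M_G(A)` is associated to `K/L` (i.e. `A·L = K·M_G(A)`, `A ∩ (M_G(A)L) = M_G(A)` and
`K ∩ (M_G(A)L) = L`). -/
theorem narrow_associated_to_chief (G : Type*) [Group G] [Finite G]
    (K L A : Subgroup G) (hKn : K.Normal) (hLn : L.Normal) (hLK : L < K)
    (hchief : ∀ M : Subgroup G, M.Normal → L < M → M < K → False)
    (hA : A.Normal) (hnt : A ≠ ⊥) (hnar : Narrow G A)
    (hAK : A ≤ K) (hAL : ¬ A ≤ L) :
    A ⊓ L = MG G A ∧ A ⊔ L = K ∧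
    (A ⊔ L = K ⊔ MG G A ∧ A ⊓ (MG G A ⊔ L) = MG G A ∧ K ⊓ (MG G A ⊔ L) = L) := by
  classical
  -- `A ⊓ L` is a maximal proper `G`-invariant subgroup of `A`.
  have hmax : IsMaxGInv G A (A ⊓ L) := by
    refine ⟨⟨inf_le_left, fun g b hb => ⟨hA.conj_mem b hb.1 g, hLn.conj_mem b hb.2 g⟩⟩, ?_, ?_⟩
    · refine lt_of_le_of_ne inf_le_left (fun h => hAL ?_)
      calc A = A ⊓ L := h.symm
        _ ≤ L := inf_le_right
    · intro C hC hCA hle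
      have hCn : C.Normal := ⟨fun n hn g => hC.2 g n hn⟩
      have hsupn : (C ⊔ L).Normal := Subgroup.sup_normal C L
      by_cases hK : C ⊔ L = K
      · exfalso
        have hAC : A ≤ C := by
          intro a ha
          have haK : a ∈ C ⊔ L := hK ▸ hAK ha
          have : a ∈ (C : Set G) * (L : Set G) := by
            rw [← Subgroup.mul_normal]; exact haK
          obtain ⟨c, hc, l, hl, hcl⟩ := this
          have hlA : l ∈ A := by
            have : l = c⁻¹ * a := by rw [← hcl]; group
            rw [this]; exact A.mul_mem (A.inv_mem (hC.1 hc)) ha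
          have : l ∈ C := hle ⟨hlA, hl⟩
          rw [← hcl]; exact C.mul_mem hc this
        exact (not_le_of_gt hCA) hAC
      · have hlt : C ⊔ L < K :=
          lt_of_le_of_ne (sup_le (hC.1.trans hAK) hLK.le) hK
        have hLe : C ⊔ L = L := by
          by_contra hne
          exact hchief (C ⊔ L) hsupn (lt_of_le_of_ne le_sup_right (Ne.symm hne)) hlt
        have hCL : C ≤ L := le_sup_left.trans hLe.le
        exact le_antisymm hle (le_inf hC.1 hCL)
  obtain ⟨B, hB, hBu⟩ := hnar
  have hMG : MG G A = A ⊓ L := by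
    refine le_antisymm (sInf_le hmax) (le_sInf fun B' hB' => ?_)
    rw [hBu B' hB', ← hBu _ hmax]
  -- `A ⊔ L = K`
  have hsup : A ⊔ L = K := by
    have hn : (A ⊔ L).Normal := Subgroup.sup_normal A L
    have hle : A ⊔ L ≤ K := sup_le hAK hLK.le
    rcases lt_or_eq_of_le hle with h | h
    · exact absurd (hchief (A ⊔ L) hn
        (lt_of_le_of_ne le_sup_right (fun h' => hAL (h' ▸ le_sup_left))) h) not_false
    · exact h
  have hMGL : MG G A ≤ L := hMG.le.trans inf_le_right
  have hMGA : MG G A ≤ A := hMG.le.trans inf_le_left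
  refine ⟨hMG.symm, hsup, ?_, ?_, ?_⟩
  · rw [sup_of_le_left (hMGA.trans hAK), hsup]
  · rw [sup_of_le_right hMGL, hMG]
  · rw [sup_of_le_right hMGL, inf_of_le_right hLK.le]
end

section
/- Let B be a finite group and consider the wreath product W = B ≀ A₅ with respect to the natural action of A₅ on {1,...,5}. Let K = {f : {1,...,5} → B | f(1)f(2)f(3)f(4)f(5) ∈ [B,B]}. Then K is a normal subgroup of W, the subgroup K ⋊ A₅ of W is perfect, and K has B as a quotient group. -/
/-!
`K ⊔ A₅` is the kernel `N` of `θ : W → B/[B,B]`, `(f, σ) ↦ ∏ f(i)`, so it suffices that `N` is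
perfect. Since `A₅` is perfect, `[N, N]` contains `A₅`. Commutators `[σ, f]` with `σ ∈ A₅` and
`f ∈ N` give every dipole `b eᵢ / b eⱼ` (`b` at `i`, `b⁻¹` at `j`), and the commutator of two
dipoles sharing the coordinate `i` is `[g, h] eᵢ`. A base element whose coordinate product lies
in `[B, B]` telescopes into four dipoles and one element of `[B, B]` in a single coordinate.
Every dipole lies in `K`, so evaluation at a coordinate maps `K` onto `B`.
-/

open SemidirectProduct

variable (B : Type*) [Group B]

/-- The action of `A₅` on `Fin 5 → B` permuting coordinates, as automorphisms. -/
def a5Aut : ↥(alternatingGroup (Fin 5)) →* MulAut (Fin 5 → B) :=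
  mulAutArrow.comp (alternatingGroup (Fin 5)).subtype

/-- The wreath product `W = B ≀ A₅ = B⁵ ⋊ A₅` with respect to the natural action of
`A₅` on `{1,…,5}`. -/
def WreathA5 := (Fin 5 → B) ⋊[a5Aut B] ↥(alternatingGroup (Fin 5))

instance : Group (WreathA5 B) :=
  inferInstanceAs (Group ((Fin 5 → B) ⋊[a5Aut B] ↥(alternatingGroup (Fin 5))))

/-- The homomorphism `B⁵ → B/[B,B]` multiplying the (abelianized) coordinates. -/
def prodAb : (Fin 5 → B) →* Abelianization B :=
  ∏ i : Fin 5, Abelianization.of.comp (Pi.evalMonoidHom (fun _ : Fin 5 => B) i)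

/-- The homomorphism `W → B/[B,B]`, `(f, σ) ↦ f(1)f(2)f(3)f(4)f(5) mod [B,B]`. -/
def thetaW : WreathA5 B →* Abelianization B :=
  SemidirectProduct.lift (prodAb B) 1 (by
    intro g
    ext n
    simp only [MonoidHom.comp_apply, MulEquiv.coe_toMonoidHom, MonoidHom.one_apply, map_one,
      MulAut.one_apply, a5Aut, prodAb, MonoidHom.finset_prod_apply, Pi.evalMonoidHom_apply,
      mulAutArrow_apply_apply]
    exact Equiv.prod_comp _ (fun i => Abelianization.of (n i)))

/-- `K = {f : {1,…,5} → B | f(1)f(2)f(3)f(4)f(5) ∈ [B,B]}`, as a subgroup of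
`W = B ≀ A₅`: the intersection of the base group with the kernel of `thetaW`. -/
def Ksub : Subgroup (WreathA5 B) :=
  (rightHom : WreathA5 B →* ↥(alternatingGroup (Fin 5))).ker ⊓ (thetaW B).ker

open scoped commutatorElement

namespace Pi

variable {ι G : Type*} [DecidableEq ι] [Group G]

theorem commutatorElement_mulSingle_div_mulSingle {i j k : ι} (hij : i ≠ j) (hik : i ≠ k)
    (hjk : j ≠ k) (g h : G) :
    ⁅(mulSingle i g / mulSingle j g : ι → G), mulSingle i h / mulSingle k h⁆ =
      (mulSingle i ⁅g, h⁆ : ι → G) := by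
  funext x
  simp only [commutatorElement_def, mul_apply, div_apply, inv_apply, mulSingle_apply]
  split_ifs <;> subst_vars <;> simp_all

end Pi

namespace SemidirectProduct

variable {N G : Type*} [Group N] [Group G] {φ : G →* MulAut N}

theorem commutatorElement_inr_inl (g : G) (n : N) :
    ⁅(inr g : N ⋊[φ] G), inl n⁆ = (inl (φ g n * n⁻¹) : N ⋊[φ] G) := by
  simp [commutatorElement_def, inl_aut, mul_assoc]

def leftOfKerRightHom : (rightHom : N ⋊[φ] G →* G).ker →* N where
  toFun w := (w : N ⋊[φ] G).left
  map_one' := rfl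
  map_mul' a b := by
    simp [mul_left, show (a : N ⋊[φ] G).right = 1 from a.2]

end SemidirectProduct

theorem MonoidHom.range_le_commutator_of_commutator_eq_top {G H : Type*} [Group G] [Group H]
    (f : G →* H) (hG : commutator G = ⊤) {K : Subgroup H} (hK : f.range ≤ K) :
    f.range ≤ ⁅K, K⁆ := by
  rw [f.range_eq_map, ← hG, commutator_def, Subgroup.map_commutator, ← f.range_eq_map]
  exact Subgroup.commutator_mono hK hK

theorem exists_mem_alternatingGroup_apply_eq_apply_eq_self {α : Type*} [Fintype α]
    [DecidableEq α] {i j k m : α} (hij : i ≠ j) (hik : i ≠ k) (him : i ≠ m) (hjk : j ≠ k)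
    (hjm : j ≠ m) (hkm : k ≠ m) :
    ∃ s ∈ alternatingGroup α, s j = i ∧ s k = k :=
  ⟨Equiv.swap j m * Equiv.swap j i, by simp [hjm, hij.symm],
    by simp [Equiv.swap_apply_of_ne_of_ne hij him],
    by simp [Equiv.swap_apply_of_ne_of_ne hjk.symm hik.symm,
      Equiv.swap_apply_of_ne_of_ne hjk.symm hkm]⟩

section WreathA5

variable {B}

theorem prodAb_apply (f : Fin 5 → B) : prodAb B f = Abelianization.of (List.ofFn f).prod := by
  rw [map_list_prod, List.map_ofFn, List.prod_ofFn]
  simp [prodAb, MonoidHom.finsetProd_apply]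

theorem prodAb_mulSingle (i : Fin 5) (b : B) :
    prodAb B (Pi.mulSingle i b) = Abelianization.of b := by
  simp [prodAb, MonoidHom.finsetProd_apply, Pi.mulSingle_apply, apply_ite]

theorem thetaW_apply (w : WreathA5 B) : thetaW B w = prodAb B w.left :=
  mul_one _

theorem thetaW_inl (f : Fin 5 → B) : thetaW B (inl f) = prodAb B f :=
  thetaW_apply _

theorem mem_ker_thetaW {w : WreathA5 B} :
    w ∈ (thetaW B).ker ↔ (List.ofFn w.left).prod ∈ commutator B := by
  rw [MonoidHom.mem_ker, thetaW_apply, prodAb_apply]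
  exact QuotientGroup.eq_one_iff _

theorem mem_Ksub {w : WreathA5 B} :
    w ∈ Ksub B ↔ w.right = 1 ∧ (List.ofFn w.left).prod ∈ commutator B :=
  and_congr Iff.rfl mem_ker_thetaW

instance Ksub_normal : (Ksub B).Normal :=
  @Subgroup.normal_inf_normal _ _ _ _ (MonoidHom.normal_ker _) (MonoidHom.normal_ker _)

theorem a5Aut_apply (s : alternatingGroup (Fin 5)) (f : Fin 5 → B) :
    a5Aut B s f = f ∘ ((s⁻¹ : alternatingGroup (Fin 5)) : Equiv.Perm (Fin 5)) :=
  rfl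

theorem a5Aut_mulSingle (s : alternatingGroup (Fin 5)) (i : Fin 5) (b : B) :
    a5Aut B s (Pi.mulSingle i b) = Pi.mulSingle ((s : Equiv.Perm (Fin 5)) i) b := by
  rw [a5Aut_apply, Subgroup.coe_inv, Equiv.Perm.inv_def, Pi.mulSingle_comp_equiv, Equiv.symm_symm]

theorem inl_mulSingle_div_mem_ker_thetaW (i j : Fin 5) (b : B) :
    (inl (Pi.mulSingle i b / Pi.mulSingle j b) : WreathA5 B) ∈ (thetaW B).ker := by
  show thetaW B (inl _) = 1
  rw [thetaW_inl, map_div, prodAb_mulSingle, prodAb_mulSingle, div_self']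

theorem range_inr_le_ker_thetaW :
    (inr : alternatingGroup (Fin 5) →* WreathA5 B).range ≤ (thetaW B).ker := by
  rintro _ ⟨s, rfl⟩
  exact lift_inr _ _ _ s

theorem range_inr_le_commutator_ker_thetaW :
    (inr : alternatingGroup (Fin 5) →* WreathA5 B).range ≤
      ⁅(thetaW B).ker, (thetaW B).ker⁆ :=
  MonoidHom.range_le_commutator_of_commutator_eq_top (inr : _ →* WreathA5 B)
    (commutator_alternatingGroup_eq_top (by simp)) range_inr_le_ker_thetaW

theorem inl_mulSingle_div_mem_commutator_ker_thetaW {i j : Fin 5} (hij : i ≠ j) (b : B) :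
    (inl (Pi.mulSingle i b / Pi.mulSingle j b) : WreathA5 B) ∈
      ⁅(thetaW B).ker, (thetaW B).ker⁆ := by
  obtain ⟨k, m, hik, him, hjk, hjm, hkm⟩ :
      ∃ k m : Fin 5, i ≠ k ∧ i ≠ m ∧ j ≠ k ∧ j ≠ m ∧ k ≠ m := by
    revert i j; decide
  obtain ⟨s, hs, hsj, hsk⟩ :=
    exists_mem_alternatingGroup_apply_eq_apply_eq_self hij hik him hjk hjm hkm
  have hconj : a5Aut B ⟨s, hs⟩ (Pi.mulSingle j b / Pi.mulSingle k b) *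
      (Pi.mulSingle j b / Pi.mulSingle k b)⁻¹ = Pi.mulSingle i b / Pi.mulSingle j b := by
    rw [map_div, a5Aut_mulSingle, a5Aut_mulSingle, hsj, hsk, inv_div, div_mul_div_cancel]
  rw [← hconj, ← commutatorElement_inr_inl]
  exact Subgroup.commutator_mem_commutator (range_inr_le_ker_thetaW ⟨_, rfl⟩)
    (inl_mulSingle_div_mem_ker_thetaW j k b)

theorem inl_mulSingle_mem_commutator_ker_thetaW (i : Fin 5) {c : B} (hc : c ∈ commutator B) :
    (inl (Pi.mulSingle i c) : WreathA5 B) ∈ ⁅(thetaW B).ker, (thetaW B).ker⁆ := by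
  obtain ⟨j, k, hij, hik, hjk⟩ : ∃ j k : Fin 5, i ≠ j ∧ i ≠ k ∧ j ≠ k := by
    revert i; decide
  suffices commutator B ≤ ⁅(thetaW B).ker, (thetaW B).ker⁆.comap
      ((inl : (Fin 5 → B) →* WreathA5 B).comp (MonoidHom.mulSingle _ i)) from this hc
  rw [commutator_def, Subgroup.commutator_le]
  intro g _ h _
  show (inl (Pi.mulSingle i ⁅g, h⁆) : WreathA5 B) ∈ ⁅(thetaW B).ker, (thetaW B).ker⁆
  rw [← Pi.commutatorElement_mulSingle_div_mulSingle hij hik hjk, map_commutatorElement]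
  exact Subgroup.commutator_mem_commutator (inl_mulSingle_div_mem_ker_thetaW i j g)
    (inl_mulSingle_div_mem_ker_thetaW i k h)

theorem inl_mem_commutator_ker_thetaW {f : Fin 5 → B} (hf : (List.ofFn f).prod ∈ commutator B) :
    (inl f : WreathA5 B) ∈ ⁅(thetaW B).ker, (thetaW B).ker⁆ := by
  have htelescope : f = (Pi.mulSingle 0 (f 0) / Pi.mulSingle 1 (f 0)) *
      (Pi.mulSingle 1 (f 0 * f 1) / Pi.mulSingle 2 (f 0 * f 1)) *
      (Pi.mulSingle 2 (f 0 * f 1 * f 2) / Pi.mulSingle 3 (f 0 * f 1 * f 2)) *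
      (Pi.mulSingle 3 (f 0 * f 1 * f 2 * f 3) / Pi.mulSingle 4 (f 0 * f 1 * f 2 * f 3)) *
      Pi.mulSingle 4 (f 0 * f 1 * f 2 * f 3 * f 4) := by
    funext x
    fin_cases x <;> simp <;> group
  rw [show (List.ofFn f).prod = f 0 * f 1 * f 2 * f 3 * f 4 by simp [List.ofFn_succ, mul_assoc]]
    at hf
  show f ∈ ⁅(thetaW B).ker, (thetaW B).ker⁆.comap (inl : (Fin 5 → B) →* WreathA5 B)
  rw [htelescope]
  refine mul_mem (mul_mem (mul_mem (mul_mem ?_ ?_) ?_) ?_)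
    (inl_mulSingle_mem_commutator_ker_thetaW 4 hf)
  all_goals exact inl_mulSingle_div_mem_commutator_ker_thetaW (by decide) _

theorem commutator_ker_thetaW : ⁅(thetaW B).ker, (thetaW B).ker⁆ = (thetaW B).ker := by
  refine le_antisymm (Subgroup.commutator_le_right _ _) fun w hw => ?_
  rw [← inl_left_mul_inr_right w]
  exact mul_mem (inl_mem_commutator_ker_thetaW (mem_ker_thetaW.mp hw))
    (range_inr_le_commutator_ker_thetaW ⟨_, rfl⟩)

theorem Ksub_sup_range_inr :
    Ksub B ⊔ (inr : alternatingGroup (Fin 5) →* WreathA5 B).range = (thetaW B).ker := by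
  refine le_antisymm (sup_le inf_le_right range_inr_le_ker_thetaW) fun w hw => ?_
  have hleft : (inl w.left : WreathA5 B) ∈ Ksub B :=
    ⟨rightHom_inl _, (thetaW_inl w.left).trans ((thetaW_apply w).symm.trans hw)⟩
  rw [← inl_left_mul_inr_right w]
  exact Subgroup.mul_mem_sup hleft ⟨_, rfl⟩

def Ksub.evalZero : Ksub B →* B :=
  (Pi.evalMonoidHom (fun _ : Fin 5 => B) 0).comp
    ((leftOfKerRightHom (φ := a5Aut B)).comp (Subgroup.inclusion inf_le_left))

theorem Ksub.evalZero_surjective : Function.Surjective (Ksub.evalZero (B := B)) := by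
  intro b
  have hmem : (inl (Pi.mulSingle 0 b / Pi.mulSingle 1 b) : WreathA5 B) ∈ Ksub B :=
    ⟨rightHom_inl _, inl_mulSingle_div_mem_ker_thetaW 0 1 b⟩
  refine ⟨⟨_, hmem⟩, ?_⟩
  show (Pi.mulSingle 0 b / Pi.mulSingle 1 b : Fin 5 → B) 0 = b
  simp

end WreathA5

theorem wreath_A5_perfect_subgroup :
    (∀ w : WreathA5 B, w ∈ Ksub B ↔
        (w.right = 1 ∧ (List.ofFn w.left).prod ∈ commutator B)) ∧
    (Ksub B).Normal ∧
    (⁅Ksub B ⊔ (inr : ↥(alternatingGroup (Fin 5)) →* WreathA5 B).range,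
       Ksub B ⊔ (inr : ↥(alternatingGroup (Fin 5)) →* WreathA5 B).range⁆
      = Ksub B ⊔ (inr : ↥(alternatingGroup (Fin 5)) →* WreathA5 B).range) ∧
    (∃ ψ : Ksub B →* B, Function.Surjective ψ) := by
  refine ⟨fun _ => mem_Ksub, inferInstance, ?_, ⟨Ksub.evalZero, Ksub.evalZero_surjective⟩⟩
  rw [Ksub_sup_range_inr, commutator_ker_thetaW]
end
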